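/- arXiv:2006.06970 — 4 statements merged into one kernel-verified Lean document; each statement's English description precedes it below -/
import Mathlib

section
/- Every natural number N can be written uniquely as N = Σ_{i≥0} d_i F_{i+2}, where F_k are the Fibonacci numbers (F_0=0, F_1=1), each digit d_i ∈ {0,1}, only finitely many d_i are nonzero, and no two consecutive digits are both 1 (d_i d_{i+1} = 11 never occurs). -/
noncomputable def phi : ℝ := (1 + Real.sqrt 5) / 2

/-- Lower Wythoff sequence. -/
noncomputable def A (n : ℕ) : ℕ := (⌊(n : ℝ) * phi⌋).toNat

/-- Upper Wythoff sequence. -/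
noncomputable def B (n : ℕ) : ℕ := (⌊(n : ℝ) * phi ^ 2⌋).toNat

/-- `d` is the digit sequence of the Zeckendorf expansion of `N`:
digits are 0/1, no two consecutive 1's, finitely many nonzero digits,
and `N = Σ dᵢ · F_{i+2}`. -/
def IsZeck (N : ℕ) (d : ℕ → ℕ) : Prop :=
  (∀ i, d i ≤ 1) ∧ (∀ i, ¬(d i = 1 ∧ d (i + 1) = 1)) ∧
  (Function.support d).Finite ∧ N = ∑ᶠ i, d i * Nat.fib (i + 2)

/-!
A digit sequence `d` with the required properties is the same thing as a finite set `T` of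
Fibonacci indices, all at least `2` and no two consecutive, via `d i = 1 ↔ i + 2 ∈ T`. Listing
`T` in decreasing order gives a Zeckendorf representation in the sense of `List.IsZeckendorfRep`,
and `Nat.zeckendorf` inverts `l ↦ (l.map fib).sum` on those, which gives existence and uniqueness.
-/

open Nat

def IsZeckendorfSet (T : Finset ℕ) : Prop := (∀ j ∈ T, 2 ≤ j) ∧ ∀ j ∈ T, j + 1 ∉ T

namespace List.IsZeckendorfRep

variable {l : List ℕ}

theorem pairwise (hl : l.IsZeckendorfRep) : (l ++ [0]).Pairwise fun a b ↦ b + 2 ≤ a :=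
  have : Trans (fun a b : ℕ ↦ b + 2 ≤ a) (fun a b ↦ b + 2 ≤ a) (fun a b ↦ b + 2 ≤ a) :=
    ⟨fun hab hbc ↦ by omega⟩
  List.IsChain.pairwise hl

theorem nodup (hl : l.IsZeckendorfRep) : l.Nodup :=
  ((List.pairwise_append.1 hl.pairwise).1).imp fun h ↦ by omega

theorem isZeckendorfSet_toFinset (hl : l.IsZeckendorfRep) : IsZeckendorfSet l.toFinset := by
  obtain ⟨hgap, -, hzero⟩ := List.pairwise_append.1 hl.pairwise
  refine ⟨fun j hj ↦ hzero j (List.mem_toFinset.1 hj) 0 (List.mem_singleton_self 0), ?_⟩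
  intro j hj hj1
  have : Std.Symm fun a b : ℕ ↦ b + 2 ≤ a ∨ a + 2 ≤ b := ⟨fun _ _ ↦ Or.symm⟩
  have := (hgap.imp (S := fun a b ↦ b + 2 ≤ a ∨ a + 2 ≤ b) Or.inl).forall
    (List.mem_toFinset.1 hj1) (List.mem_toFinset.1 hj) (by omega)
  omega

theorem sum_fib_toFinset (hl : l.IsZeckendorfRep) : ∑ j ∈ l.toFinset, fib j = (l.map fib).sum :=
  List.sum_toFinset fib hl.nodup

end List.IsZeckendorfRep

namespace IsZeckendorfSet

variable {T : Finset ℕ}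

theorem isZeckendorfRep_sort (hT : IsZeckendorfSet T) : (T.sort (· ≥ ·)).IsZeckendorfRep := by
  refine List.Pairwise.isChain (List.pairwise_append.2 ⟨?_, List.pairwise_singleton _ _, ?_⟩)
  · refine (T.sortedGT_sort.pairwise).imp_of_mem fun {a b} ha hb hab ↦ ?_
    have : b + 1 ≠ a := by
      rintro rfl
      exact hT.2 b ((T.mem_sort _).1 hb) ((T.mem_sort _).1 ha)
    omega
  · intro a ha b hb
    rw [List.mem_singleton.1 hb]
    exact hT.1 a (T.mem_sort _ |>.1 ha)

theorem toFinset_zeckendorf_sum_fib (hT : IsZeckendorfSet T) :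
    (∑ j ∈ T, fib j).zeckendorf.toFinset = T := by
  have hsort := hT.isZeckendorfRep_sort
  rw [← T.sort_toFinset (· ≥ ·), hsort.sum_fib_toFinset, zeckendorf_sum_fib hsort]

end IsZeckendorfSet

def zeckDigits (T : Finset ℕ) (i : ℕ) : ℕ := if i + 2 ∈ T then 1 else 0

theorem finsum_zeckDigits_mul_fib {T : Finset ℕ} (hT : ∀ j ∈ T, 2 ≤ j) :
    ∑ᶠ i, zeckDigits T i * fib (i + 2) = ∑ j ∈ T, fib j := by
  have hrange : (T : Set ℕ) ⊆ Set.range (· + 2) := fun j hj ↦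
    ⟨j - 2, Nat.sub_add_cancel (hT j hj)⟩
  calc ∑ᶠ i, zeckDigits T i * fib (i + 2)
      = ∑ᶠ i ∈ (· + 2) ⁻¹' (T : Set ℕ), fib (i + 2) := by
        rw [finsum_mem_def]
        refine finsum_congr fun i ↦ ?_
        by_cases hi : i + 2 ∈ T <;> simp [zeckDigits, hi]
    _ = ∑ᶠ j ∈ (· + 2) '' ((· + 2) ⁻¹' (T : Set ℕ)), fib j :=
        (finsum_mem_image (add_left_injective 2).injOn).symm
    _ = ∑ j ∈ T, fib j := by rw [Set.image_preimage_eq_of_subset hrange, finsum_mem_coe_finset]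

theorem zeckDigits_eq_one {T : Finset ℕ} {i : ℕ} : zeckDigits T i = 1 ↔ i + 2 ∈ T := by
  simp [zeckDigits]

theorem support_zeckDigits (T : Finset ℕ) : Function.support (zeckDigits T) = (· + 2) ⁻¹' T := by
  ext i
  simp [zeckDigits]

theorem isZeck_zeckDigits {T : Finset ℕ} (hT : IsZeckendorfSet T) :
    IsZeck (∑ j ∈ T, fib j) (zeckDigits T) := by
  refine ⟨fun i ↦ ?_, fun i ↦ ?_, ?_, (finsum_zeckDigits_mul_fib hT.1).symm⟩
  · unfold zeckDigits; split <;> omega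
  · rw [zeckDigits_eq_one, zeckDigits_eq_one]
    exact fun h ↦ hT.2 _ h.1 h.2
  · rw [support_zeckDigits]
    exact T.finite_toSet.preimage (add_left_injective 2).injOn

theorem IsZeck.exists_eq_zeckDigits {N : ℕ} {d : ℕ → ℕ} (h : IsZeck N d) :
    ∃ T, IsZeckendorfSet T ∧ N = ∑ j ∈ T, fib j ∧ d = zeckDigits T := by
  obtain ⟨hle, hsep, hfin, hN⟩ := h
  set T := hfin.toFinset.image (· + 2)
  have hd : d = zeckDigits T := by
    funext i
    have := hle i
    by_cases hi : d i = 0 <;> simp [zeckDigits, T, hi]; omega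
  have hT2 : ∀ j ∈ T, 2 ≤ j := by
    intro j hj
    obtain ⟨i, -, rfl⟩ := Finset.mem_image.1 hj
    omega
  refine ⟨T, ⟨hT2, fun j hj hj1 ↦ ?_⟩, ?_, hd⟩
  · obtain ⟨i, -, rfl⟩ := Finset.mem_image.1 hj
    refine hsep i ⟨?_, ?_⟩ <;> rw [hd, zeckDigits_eq_one]
    exacts [hj, hj1]
  · rw [hN, ← finsum_zeckDigits_mul_fib hT2, ← hd]

/-- Zeckendorf's theorem: every natural number has a unique Zeckendorf expansion. -/
theorem zeckendorf_exists_unique (N : ℕ) : ∃! d : ℕ → ℕ, IsZeck N d := by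
  have hrep := isZeckendorfRep_zeckendorf N
  refine ⟨zeckDigits N.zeckendorf.toFinset, ?_, fun d hd ↦ ?_⟩
  · simpa only [hrep.sum_fib_toFinset, sum_zeckendorf_fib] using
      isZeck_zeckDigits hrep.isZeckendorfSet_toFinset
  · obtain ⟨T, hT, rfl, rfl⟩ := hd.exists_eq_zeckDigits
    rw [hT.toFinset_zeckendorf_sum_fib]
end

section
/- A natural number N has last Zeckendorf digit d_0 = 0 if and only if N+1 belongs to the lower Wythoff sequence, i.e., N = ⌊nφ⌋ - 1 for some positive integer n, where φ = (1+√5)/2. -/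
/-!
Let `S ⊆ {1, 2, …}` be the set of positions of the nonzero digits of `N`, with no two consecutive
elements, and put `n = 1 + ∑_{i ∈ S} F_{i+1}`. Since `φ F_k = F_{k+1} - ψ ^ k`,
`n φ = N + 1 + (-ψ - ∑_{i ∈ S} ψ ^ (i + 1))`. A sum of powers of `ψ` with gaps between the
exponents is dominated by its leading term, which puts `∑_{i ∈ S} ψ ^ (i + 1)` in `(-ψ², -ψ)`,
so the bracket lies in `(0, 1)` and `⌊n φ⌋ = N + 1`. Every `n ≥ 1` arises this way, from the
Zeckendorf expansion of `n - 1`.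
-/

open Finset
open scoped goldenRatio

theorem abs_sum_pow_succ_lt {x : ℝ} (hx0 : x ≠ 0) (hx : |x| + x ^ 2 ≤ 1) {s : Finset ℕ}
    (hs : ∀ i ∈ s, i + 1 ∉ s) {m : ℕ} (hm : ∀ i ∈ s, m ≤ i) :
    |∑ i ∈ s, x ^ (i + 1)| < |x| ^ m := by
  induction s using Finset.induction_on_min generalizing m with
  | empty => simpa using pow_pos (abs_pos.2 hx0) m
  | insert a s ha ih =>
    have has : a ∉ s := fun h => (ha a h).false
    have hs' : ∀ i ∈ s, i + 1 ∉ s := fun i hi hi1 =>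
      hs i (mem_insert_of_mem hi) (mem_insert_of_mem hi1)
    have hgap : ∀ i ∈ s, a + 2 ≤ i := fun i hi => by
      have := ha i hi
      have : i ≠ a + 1 := fun h => hs a (mem_insert_self a s) (h ▸ mem_insert_of_mem hi)
      omega
    have habs : |x| ≤ 1 := by nlinarith [sq_nonneg x]
    calc |∑ i ∈ insert a s, x ^ (i + 1)|
        ≤ |x| ^ (a + 1) + |∑ i ∈ s, x ^ (i + 1)| := by
          rw [sum_insert has, ← abs_pow]; exact abs_add_le _ _
      _ < |x| ^ (a + 1) + |x| ^ (a + 2) := by gcongr; exact ih hs' hgap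
      _ = |x| ^ a * (|x| + x ^ 2) := by rw [← sq_abs]; ring
      _ ≤ |x| ^ a := mul_le_of_le_one_right (by positivity) hx
      _ ≤ |x| ^ m := pow_le_pow_of_le_one (abs_nonneg x) habs (hm a (mem_insert_self a s))

theorem sum_goldenConj_pow_succ_mem_Ioo {s : Finset ℕ} (h0 : 0 ∉ s) (hs : ∀ i ∈ s, i + 1 ∉ s) :
    ∑ i ∈ s, ψ ^ (i + 1) ∈ Set.Ioo (-ψ ^ 2) (-ψ) := by
  have hψ : |ψ| + ψ ^ 2 ≤ 1 := by
    rw [abs_of_neg Real.goldenConj_neg, Real.goldenConj_sq]; linarith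
  have hupper := abs_sum_pow_succ_lt Real.goldenConj_ne_zero hψ hs (m := 1)
    (fun i hi => Nat.one_le_iff_ne_zero.2 (ne_of_mem_of_not_mem hi h0))
  -- Apart from the term `ψ ^ 2 ≥ 0` for `i = 1`, all exponents are `≥ 3`.
  have hlower := abs_sum_pow_succ_lt Real.goldenConj_ne_zero hψ (s := s.erase 1) (m := 2)
    (fun i hi hi1 => hs i (mem_of_mem_erase hi) (mem_of_mem_erase hi1))
    (fun i hi => by
      have := ne_of_mem_of_not_mem (mem_of_mem_erase hi) h0
      have := ne_of_mem_erase hi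
      omega)
  have herase : ∑ i ∈ s.erase 1, ψ ^ (i + 1) ≤ ∑ i ∈ s, ψ ^ (i + 1) :=
    sum_le_sum_of_subset_of_nonneg (erase_subset 1 s) fun i hi hi' => by
      obtain rfl : i = 1 := by simpa [hi] using hi'
      exact sq_nonneg ψ
  rw [abs_lt, pow_one, abs_of_neg Real.goldenConj_neg] at hupper
  rw [abs_lt, sq_abs] at hlower
  exact ⟨by linarith, hupper.2⟩

theorem floor_one_add_sum_fib_mul_goldenRatio {s : Finset ℕ} (h0 : 0 ∉ s)
    (hs : ∀ i ∈ s, i + 1 ∉ s) :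
    ⌊((1 + ∑ i ∈ s, Nat.fib (i + 1) : ℕ) : ℝ) * φ⌋ = ((∑ i ∈ s, Nat.fib (i + 2) : ℕ) : ℤ) + 1 := by
  have hfib (i : ℕ) : (Nat.fib (i + 1) : ℝ) * φ = Nat.fib (i + 2) - ψ ^ (i + 1) := by
    linarith [Real.fib_succ_sub_goldenRatio_mul_fib (i + 1)]
  have hsplit : ((1 + ∑ i ∈ s, Nat.fib (i + 1) : ℕ) : ℝ) * φ
      = (∑ i ∈ s, Nat.fib (i + 2) : ℕ) + 1 + (-ψ - ∑ i ∈ s, ψ ^ (i + 1)) := by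
    push_cast
    rw [add_mul, sum_mul]
    simp only [hfib, sum_sub_distrib]
    linarith [Real.goldenRatio_add_goldenConj]
  obtain ⟨hlow, hhigh⟩ := sum_goldenConj_pow_succ_mem_Ioo h0 hs
  rw [Int.floor_eq_iff, hsplit]
  push_cast
  constructor <;> linarith [Real.goldenConj_sq]

theorem exists_finset_sum_fib_succ_eq (n : ℕ) :
    ∃ s : Finset ℕ, 0 ∉ s ∧ (∀ i ∈ s, i + 1 ∉ s) ∧ ∑ i ∈ s, Nat.fib (i + 1) = n := by
  let R : ℕ → ℕ → Prop := fun a b => b + 2 ≤ a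
  have : Trans R R R := ⟨fun h₁ h₂ => by simp only [R] at *; omega⟩
  have hrep : (n.zeckendorf ++ [0]).Pairwise R := (Nat.isZeckendorfRep_zeckendorf n).pairwise
  obtain ⟨hl, -, hl2⟩ := List.pairwise_append.1 hrep
  simp only [List.mem_singleton, forall_eq, R, zero_add] at hl2
  -- `Nat.zeckendorf n` lists indices `a ≥ 2` of `fib a`; shift them to `i = a - 1`.
  set l := n.zeckendorf.map (· - 1)
  have hpos : ∀ i ∈ l, 1 ≤ i := by
    simp only [l, List.mem_map]
    rintro _ ⟨a, ha, rfl⟩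
    have := hl2 a ha
    omega
  have hlR : l.Pairwise R := List.pairwise_map.2 (hl.imp_of_mem fun ha hb h => by
    have := hl2 _ ha; have := hl2 _ hb; simp only [R] at *; omega)
  have : Std.Symm fun a b : ℕ => a + 1 ≠ b ∧ b + 1 ≠ a := ⟨fun _ _ h => h.symm⟩
  have hgap : l.Pairwise fun a b => a + 1 ≠ b ∧ b + 1 ≠ a :=
    hlR.imp fun {a b} (h : b + 2 ≤ a) => ⟨by omega, by omega⟩
  refine ⟨l.toFinset, fun h => ?_, fun i hi hi1 => ?_, ?_⟩
  · have := hpos 0 (List.mem_toFinset.1 h); omega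
  · exact (hgap.forall (List.mem_toFinset.1 hi) (List.mem_toFinset.1 hi1) (by omega)).1 rfl
  · rw [List.sum_toFinset _ (hlR.imp fun {a b} (h : b + 2 ≤ a) => by omega), List.map_map]
    conv_rhs => rw [← Nat.sum_zeckendorf_fib n]
    congr 1
    refine List.map_congr_left fun a ha => ?_
    have := hl2 a ha
    simp only [Function.comp_apply]
    congr 1
    omega

theorem finsum_ite_mem_mul {α M : Type*} [DecidableEq α] [NonAssocSemiring M] (s : Finset α)
    (f : α → M) :
    ∑ᶠ i, (if i ∈ s then 1 else 0) * f i = ∑ i ∈ s, f i := by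
  rw [finsum_eq_sum_of_support_subset _ (s := s) fun i hi => ?_]
  · exact sum_congr rfl fun i hi => by simp [hi]
  · by_contra h
    simp_all

theorem isZeck_iff {N : ℕ} {d : ℕ → ℕ} :
    IsZeck N d ↔ ∃ s : Finset ℕ, (∀ i ∈ s, i + 1 ∉ s) ∧
      d = (fun i => if i ∈ s then 1 else 0) ∧ N = ∑ i ∈ s, Nat.fib (i + 2) := by
  constructor
  · rintro ⟨hd1, hnc, hfin, hN⟩
    obtain ⟨s, hs⟩ : ∃ s : Finset ℕ, ∀ i, i ∈ s ↔ d i ≠ 0 :=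
      ⟨hfin.toFinset, fun i => hfin.mem_toFinset⟩
    have hd : d = fun i => if i ∈ s then 1 else 0 := by
      funext i
      have := hd1 i
      by_cases h : d i = 0
      · simp [hs, h]
      · simp [hs, h]; omega
    subst hd
    refine ⟨s, fun i hi hi1 => hnc i ?_, rfl, hN.trans (finsum_ite_mem_mul s _)⟩
    simp [hi, hi1]
  · rintro ⟨s, hs, rfl, rfl⟩
    refine ⟨fun i => by by_cases h : i ∈ s <;> simp [h], fun i ⟨hi, hi1⟩ => hs i ?_ ?_,
      s.finite_toSet.subset fun i hi => ?_, (finsum_ite_mem_mul _ _).symm⟩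
    · by_contra h; simp [h] at hi
    · by_contra h; simp [h] at hi1
    · by_contra h; simp_all

theorem phi_eq_goldenRatio : phi = φ := rfl

/-- N has last Zeckendorf digit 0 iff N+1 is in the lower Wythoff sequence. -/
theorem zeck_digit0_eq_zero_iff (N : ℕ) :
    (∃ d : ℕ → ℕ, IsZeck N d ∧ d 0 = 0) ↔
      ∃ n : ℕ, 0 < n ∧ (N : ℤ) = ⌊(n : ℝ) * phi⌋ - 1 := by
  rw [phi_eq_goldenRatio]
  constructor
  · rintro ⟨d, hd, hd0⟩
    obtain ⟨s, hs, rfl, rfl⟩ := isZeck_iff.1 hd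
    have h0 : 0 ∉ s := by simpa using hd0
    refine ⟨1 + ∑ i ∈ s, Nat.fib (i + 1), by omega, ?_⟩
    rw [floor_one_add_sum_fib_mul_goldenRatio h0 hs]
    ring
  · rintro ⟨n, hn, hN⟩
    obtain ⟨s, h0, hs, hsum⟩ := exists_finset_sum_fib_succ_eq (n - 1)
    have hfloor := floor_one_add_sum_fib_mul_goldenRatio h0 hs
    rw [show 1 + ∑ i ∈ s, Nat.fib (i + 1) = n by omega] at hfloor
    exact ⟨_, isZeck_iff.2 ⟨s, hs, rfl, by omega⟩, by simp [h0]⟩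
end

section
/- A natural number N has last Zeckendorf digit d_0 = 1 if and only if N+1 belongs to the upper Wythoff sequence, i.e., N = ⌊nφ²⌋ - 1 for some positive integer n, where φ = (1+√5)/2. -/
/-!
Write `N = ∑ i ∈ s, F (i + 2)` for a Zeckendorf digit set `s`. Since `F (i + 2) = φ² F i + ψ ^ i`,
we get `N + 1 = φ² M + u` with `M = ∑ i ∈ s, F i` and `u = 1 + ∑ i ∈ s, ψ ^ i`. For
`0 < u ≤ φ²`, `N + 1` is of the form `⌊n φ²⌋` exactly when `n = M + 1` works, i.e. when
`φ < u`. Comparing the alternating sum `∑ ψ ^ i` with geometric series gives `u ∈ (φ, φ²)`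
if `0 ∈ s` (so that `1 ∉ s`), and `u ∈ (0, φ)` if `0 ∉ s`.
-/

open Real goldenRatio Finset

lemma natCast_fib_add_two_eq_fib_mul_goldenRatio_sq_add (i : ℕ) :
    (Nat.fib (i + 2) : ℝ) = Nat.fib i * φ ^ 2 + ψ ^ i := by
  rw [Nat.fib_add_two, Nat.cast_add, goldenRatio_sq]
  linear_combination fib_succ_sub_goldenRatio_mul_fib i

lemma sum_pow_lt_of_mod_two_eq {q : ℝ} (hq0 : 0 < q) (hq1 : q < 1) {t : Finset ℕ} {m : ℕ}
    (ht : ∀ e ∈ t, m ≤ e ∧ e % 2 = m % 2) : ∑ e ∈ t, q ^ e < q ^ m / (1 - q ^ 2) := by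
  have hq2 : q ^ 2 < 1 := pow_lt_one₀ hq0.le hq1 two_ne_zero
  set K := t.sup id + 1
  have ht_sub : t ⊆ (range K).image (fun k => m + 2 * k) := fun e he => by
    have : e ≤ t.sup id := le_sup (f := id) he
    have := ht e he
    exact mem_image.2 ⟨(e - m) / 2, mem_range.2 (by omega), by omega⟩
  calc ∑ e ∈ t, q ^ e ≤ ∑ e ∈ (range K).image (fun k => m + 2 * k), q ^ e :=
        sum_le_sum_of_subset_of_nonneg ht_sub fun e _ _ => (pow_pos hq0 e).le
    _ = q ^ m * ∑ k ∈ range K, (q ^ 2) ^ k := by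
        rw [sum_image fun a _ b _ h => by omega, mul_sum]
        simp only [pow_add, pow_mul]
    _ < q ^ m / (1 - q ^ 2) := by
        have h_geom : ∑ k ∈ range K, (q ^ 2) ^ k < 1 / (1 - q ^ 2) := by
          rw [lt_div_iff₀ (by linarith), geom_sum_mul_neg]
          linarith [pow_pos (pow_pos hq0 2) K]
        rw [← mul_one_div]
        exact mul_lt_mul_of_pos_left h_geom (pow_pos hq0 m)

lemma one_sub_goldenConj_sq : 1 - ψ ^ 2 = -ψ := by
  rw [goldenConj_sq]
  ring

lemma neg_goldenConj_pow_succ_div (n : ℕ) : (-ψ) ^ (n + 1) / (1 - ψ ^ 2) = (-ψ) ^ n := by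
  rw [one_sub_goldenConj_sq, pow_succ,
    mul_div_cancel_right₀ _ (neg_ne_zero.2 goldenConj_ne_zero)]

lemma sum_goldenConj_pow_lt {s : Finset ℕ} {k : ℕ}
    (hs : ∀ i ∈ s, Even i → 2 * k + 2 ≤ i) :
    ∑ i ∈ s, ψ ^ i < -ψ ^ (2 * k + 1) := by
  rw [← sum_filter_add_sum_filter_not s Even]
  have h_odd : ∑ i ∈ s with ¬Even i, ψ ^ i ≤ 0 := sum_nonpos fun i hi =>
    (Nat.not_even_iff_odd.1 (mem_filter.1 hi).2).pow_nonpos goldenConj_neg.le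
  have h_even : ∑ i ∈ s with Even i, ψ ^ i < -ψ ^ (2 * k + 1) := calc
    ∑ i ∈ s with Even i, ψ ^ i = ∑ i ∈ s with Even i, (-ψ) ^ i :=
      sum_congr rfl fun i hi => ((mem_filter.1 hi).2.neg_pow ψ).symm
    _ < (-ψ) ^ (2 * k + 2) / (1 - (-ψ) ^ 2) := by
      refine sum_pow_lt_of_mod_two_eq (by linarith [goldenConj_neg])
        (by linarith [neg_one_lt_goldenConj]) fun i hi => ?_
      obtain ⟨his, hi_even⟩ := mem_filter.1 hi
      have := hs i his hi_even
      have := Nat.even_iff.1 hi_even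
      omega
    _ = -ψ ^ (2 * k + 1) := by
      rw [neg_sq, neg_goldenConj_pow_succ_div, Odd.neg_pow (by simp)]
  linarith

lemma neg_goldenConj_pow_lt_sum {s : Finset ℕ} {k : ℕ}
    (hs : ∀ i ∈ s, Odd i → 2 * k + 1 ≤ i) :
    -ψ ^ (2 * k) < ∑ i ∈ s, ψ ^ i := by
  rw [← sum_filter_add_sum_filter_not s Odd]
  have h_even : 0 ≤ ∑ i ∈ s with ¬Odd i, ψ ^ i := sum_nonneg fun i hi =>
    (Nat.not_odd_iff_even.1 (mem_filter.1 hi).2).pow_nonneg ψ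
  have h_odd : -ψ ^ (2 * k) < ∑ i ∈ s with Odd i, ψ ^ i := calc
    -ψ ^ (2 * k) = -((-ψ) ^ (2 * k + 1) / (1 - (-ψ) ^ 2)) := by
      rw [neg_sq, neg_goldenConj_pow_succ_div, Even.neg_pow (by simp)]
    _ < -∑ i ∈ s with Odd i, (-ψ) ^ i := by
      refine neg_lt_neg (sum_pow_lt_of_mod_two_eq (by linarith [goldenConj_neg])
        (by linarith [neg_one_lt_goldenConj]) fun i hi => ?_)
      obtain ⟨his, hi_odd⟩ := mem_filter.1 hi
      have := hs i his hi_odd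
      have := Nat.odd_iff.1 hi_odd
      omega
    _ = ∑ i ∈ s with Odd i, ψ ^ i := by
      rw [← sum_neg_distrib]
      exact sum_congr rfl fun i hi => by rw [(mem_filter.1 hi).2.neg_pow, neg_neg]
  linarith

lemma one_add_sum_goldenConj_pow_mem_Ioo_zero_goldenRatio {s : Finset ℕ} (h0 : 0 ∉ s) :
    1 + ∑ i ∈ s, ψ ^ i ∈ Set.Ioo 0 φ := by
  have hlt := sum_goldenConj_pow_lt (s := s) (k := 0) fun i hi heven => by
    have : i ≠ 0 := ne_of_mem_of_not_mem hi h0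
    have := Nat.even_iff.1 heven
    omega
  have hgt := neg_goldenConj_pow_lt_sum (s := s) (k := 0) fun i _ hi => hi.pos
  simp only [mul_zero, zero_add, pow_one, pow_zero] at hlt hgt
  constructor <;> linarith [one_sub_goldenRatio]

lemma one_add_sum_goldenConj_pow_mem_Ioo_goldenRatio_goldenRatio_sq {s : Finset ℕ} (h0 : 0 ∈ s)
    (h1 : 1 ∉ s) :
    1 + ∑ i ∈ s, ψ ^ i ∈ Set.Ioo φ (φ ^ 2) := by
  rw [← add_sum_erase s _ h0, pow_zero]
  have hlt := sum_goldenConj_pow_lt (s := s.erase 0) (k := 0) fun i hi heven => by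
    have := ne_of_mem_erase hi
    have := Nat.even_iff.1 heven
    omega
  have hgt := neg_goldenConj_pow_lt_sum (s := s.erase 0) (k := 1) fun i hi hodd => by
    have : i ≠ 1 := ne_of_mem_of_not_mem (mem_of_mem_erase hi) h1
    have := Nat.odd_iff.1 hodd
    omega
  simp only [mul_zero, mul_one, zero_add, pow_one] at hlt hgt
  constructor <;> linarith [one_sub_goldenRatio, goldenRatio_sq, goldenConj_sq]

lemma exists_floor_natCast_mul_goldenRatio_sq_eq_iff {m M : ℕ} {u : ℝ}
    (hm : (m : ℝ) = M * φ ^ 2 + u) (hu0 : 0 < u) (hu : u ≤ φ ^ 2) :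
    (∃ n : ℕ, 0 < n ∧ ⌊(n : ℝ) * φ ^ 2⌋ = m) ↔ φ < u := by
  have hφ2 : 0 < φ ^ 2 := by positivity
  constructor
  · rintro ⟨n, -, hn⟩
    obtain ⟨hmn, hnm⟩ := Int.floor_eq_iff.1 hn
    push_cast at hmn hnm
    have hMn : (M : ℝ) + 1 ≤ n := by
      have : (M : ℝ) < n := lt_of_mul_lt_mul_right (by linarith) hφ2.le
      exact_mod_cast Nat.cast_lt.1 this
    have := mul_le_mul_of_nonneg_right hMn hφ2.le
    linarith [goldenRatio_sq]
  · intro hu1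
    refine ⟨M + 1, M.succ_pos, Int.floor_eq_iff.2 ⟨?_, ?_⟩⟩ <;> push_cast <;>
      linarith [goldenRatio_sq]

lemma exists_floor_mul_goldenRatio_sq_eq_sum_fib_add_one_iff {s : Finset ℕ}
    (h01 : 0 ∈ s → 1 ∉ s) :
    (∃ n : ℕ, 0 < n ∧ ⌊(n : ℝ) * φ ^ 2⌋ = ((∑ i ∈ s, Nat.fib (i + 2) + 1 : ℕ) : ℤ)) ↔
      0 ∈ s := by
  have hm : ((∑ i ∈ s, Nat.fib (i + 2) + 1 : ℕ) : ℝ)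
      = (∑ i ∈ s, Nat.fib i : ℕ) * φ ^ 2 + (1 + ∑ i ∈ s, ψ ^ i) := by
    push_cast
    simp only [natCast_fib_add_two_eq_fib_mul_goldenRatio_sq_add, sum_add_distrib, sum_mul]
    ring
  by_cases h0 : 0 ∈ s
  · obtain ⟨hlo, hhi⟩ :=
      one_add_sum_goldenConj_pow_mem_Ioo_goldenRatio_goldenRatio_sq h0 (h01 h0)
    simpa [h0] using (exists_floor_natCast_mul_goldenRatio_sq_eq_iff hm
      (goldenRatio_pos.trans hlo) hhi.le).2 hlo
  · obtain ⟨hlo, hhi⟩ := one_add_sum_goldenConj_pow_mem_Ioo_zero_goldenRatio h0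
    rw [exists_floor_natCast_mul_goldenRatio_sq_eq_iff hm hlo
      (by linarith [goldenRatio_sq, goldenRatio_pos])]
    simpa [h0] using hhi.le

lemma IsZeck.exists_finset {N : ℕ} {d : ℕ → ℕ} (h : IsZeck N d) :
    ∃ s : Finset ℕ, (∀ i, i ∈ s ↔ d i = 1) ∧ (∀ i ∈ s, i + 1 ∉ s) ∧
      N = ∑ i ∈ s, Nat.fib (i + 2) := by
  obtain ⟨h_le, h_cons, h_fin, hN⟩ := h
  have h_mem : ∀ i, i ∈ h_fin.toFinset ↔ d i = 1 := fun i => by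
    rw [Set.Finite.mem_toFinset, Function.mem_support]
    have := h_le i
    omega
  refine ⟨h_fin.toFinset, h_mem,
    fun i hi hi1 => h_cons i ⟨(h_mem i).1 hi, (h_mem (i + 1)).1 hi1⟩, ?_⟩
  rw [hN, finsum_eq_sum_of_support_subset _ ?_]
  · exact sum_congr rfl fun i hi => by rw [(h_mem i).1 hi, one_mul]
  · rw [Set.Finite.coe_toFinset]
    exact Function.support_mul_subset_left _ _

lemma isZeck_sum_fib {s : Finset ℕ} (hs : ∀ i ∈ s, i + 1 ∉ s) :
    IsZeck (∑ i ∈ s, Nat.fib (i + 2)) (fun i => if i ∈ s then 1 else 0) := by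
  have h_supp : Function.support (fun i => if i ∈ s then 1 else 0) = s := by
    ext i
    simp
  refine ⟨fun i => by dsimp only; split_ifs <;> simp, fun i ⟨hi, hi1⟩ => ?_,
    h_supp ▸ s.finite_toSet, ?_⟩
  · simp only [ite_eq_left_iff, zero_ne_one, imp_false, not_not] at hi hi1
    exact hs i hi hi1
  · rw [finsum_eq_sum_of_support_subset _ ((Function.support_mul_subset_left _ _).trans h_supp.le)]
    exact sum_congr rfl fun i hi => by simp [hi]

lemma exists_isZeck (N : ℕ) : ∃ d, IsZeck N d := by
  set l := N.zeckendorf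
  have hl : (l ++ [0]).Pairwise fun a b => b + 2 ≤ a :=
    @List.IsChain.pairwise _ _ _ ⟨fun h₁ h₂ => by omega⟩ (Nat.isZeckendorfRep_zeckendorf N)
  simp only [List.pairwise_append, List.mem_singleton, forall_eq, zero_add] at hl
  obtain ⟨hl, -, h_two⟩ := hl
  have h_succ_ne : ∀ a ∈ l, ∀ b ∈ l, a + 1 ≠ b :=
    List.Pairwise.forall_of_forall_of_flip (fun _ _ => by omega) (hl.imp fun h => by omega)
      (hl.imp fun h => by simp only [flip]; omega)
  -- `l` lists the Fibonacci indices `i + 2`, not the digit positions `i`.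
  set s := (l.map (· - 2)).toFinset
  have h_mem : ∀ i, i ∈ s ↔ i + 2 ∈ l := fun i => by
    simp only [s, List.mem_toFinset, List.mem_map]
    refine ⟨?_, fun h => ⟨i + 2, h, rfl⟩⟩
    rintro ⟨a, ha, rfl⟩
    rwa [Nat.sub_add_cancel (h_two a ha)]
  have hs : ∀ i ∈ s, i + 1 ∉ s := fun i hi hi1 =>
    h_succ_ne _ ((h_mem i).1 hi) _ ((h_mem (i + 1)).1 hi1) rfl
  have h_nodup : (l.map (· - 2)).Nodup :=
    List.Nodup.map_on (fun a ha b hb hab => by have := h_two a ha; have := h_two b hb; omega)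
      (hl.imp fun h => by omega)
  have hN : ∑ i ∈ s, Nat.fib (i + 2) = N := by
    rw [List.sum_toFinset _ h_nodup, List.map_map]
    conv_rhs => rw [← Nat.sum_zeckendorf_fib N]
    congr 1
    exact List.map_congr_left fun a ha => by simp [Nat.sub_add_cancel (h_two a ha)]
  exact ⟨_, hN ▸ isZeck_sum_fib hs⟩

/-- N has last Zeckendorf digit 1 iff N+1 is in the upper Wythoff sequence. -/
theorem zeck_digit0_eq_one_iff (N : ℕ) :
    (∃ d : ℕ → ℕ, IsZeck N d ∧ d 0 = 1) ↔
      ∃ n : ℕ, 0 < n ∧ (N : ℤ) = ⌊(n : ℝ) * phi ^ 2⌋ - 1 := by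
  have h_upper : (∃ n : ℕ, 0 < n ∧ (N : ℤ) = ⌊(n : ℝ) * phi ^ 2⌋ - 1) ↔
      ∃ n : ℕ, 0 < n ∧ ⌊(n : ℝ) * φ ^ 2⌋ = ((N + 1 : ℕ) : ℤ) :=
    exists_congr fun n => and_congr_right fun _ => by
      change _ = ⌊(n : ℝ) * φ ^ 2⌋ - 1 ↔ _
      push_cast
      omega
  rw [h_upper]
  constructor
  · rintro ⟨d, hd, hd0⟩
    obtain ⟨s, hs, h_cons, rfl⟩ := hd.exists_finset
    exact (exists_floor_mul_goldenRatio_sq_eq_sum_fib_add_one_iff (h_cons 0)).2 ((hs 0).2 hd0)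
  · intro hN
    obtain ⟨d, hd⟩ := exists_isZeck N
    obtain ⟨s, hs, h_cons, rfl⟩ := hd.exists_finset
    exact ⟨d, hd,
      (hs 0).1 ((exists_floor_mul_goldenRatio_sq_eq_sum_fib_add_one_iff (h_cons 0)).1 hN)⟩
end

section
/- If V(n) = p⌊nφ⌋ + qn + r is a generalized Beatty sequence with integer parameters (p,q,r) and φ the golden ratio, then V∘B is a generalized Beatty sequence with parameters (2p+q, p+q, r), i.e., V(B(n)) = (2p+q)⌊nφ⌋ + (p+q)n + r for all n ≥ 1, where B(n) = ⌊nφ²⌋. -/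
/-!
With `a = ⌊nφ⌋` and `f = nφ - a ∈ [0, 1)`, the relation `φ² = φ + 1` gives
`nφ² = nφ + n`, so `B n = a + n`, and `(a + n)φ = 2a + n + f(2 - φ)`. Since `1 < φ < 2`,
the error term `f(2 - φ)` lies in `[0, 1)`, whence `A (B n) = 2 A n + n`;
substituting both into `V (B n) = p A (B n) + q B n + r` gives the claim.
-/

theorem phi_sq : phi ^ 2 = phi + 1 := Real.goldenRatio_sq

theorem one_lt_phi : 1 < phi := Real.one_lt_goldenRatio

theorem phi_lt_two : phi < 2 := Real.goldenRatio_lt_two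

theorem floor_mul_phi_sq (n : ℤ) : ⌊n * phi ^ 2⌋ = ⌊n * phi⌋ + n := by
  rw [phi_sq, mul_add, mul_one, Int.floor_add_intCast]

theorem floor_floor_mul_phi_add_mul_phi (n : ℤ) :
    ⌊(⌊n * phi⌋ + n) * phi⌋ = 2 * ⌊n * phi⌋ + n := by
  set a := ⌊n * phi⌋
  have hf₀ : 0 ≤ n * phi - a := sub_nonneg.2 (Int.floor_le _)
  have hf₁ : n * phi - a < 1 := sub_lt_iff_lt_add'.2 (Int.lt_floor_add_one _)
  have hε₀ : 0 < 2 - phi := sub_pos.2 phi_lt_two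
  have hε₁ : 2 - phi < 1 := by linarith [one_lt_phi]
  have hsplit : ((a : ℝ) + n) * phi = (2 * a + n : ℤ) + (n * phi - a) * (2 - phi) := by
    push_cast
    linear_combination (n : ℝ) * phi_sq
  rw [hsplit, Int.floor_intCast_add, add_eq_left, Int.floor_eq_zero_iff]
  exact ⟨mul_nonneg hf₀ hε₀.le, mul_lt_one_of_nonneg_of_lt_one_left hf₀ hf₁ hε₁.le⟩

theorem floor_natCast_mul_phi_nonneg (n : ℕ) : 0 ≤ ⌊(n : ℝ) * phi⌋ :=
  Int.floor_nonneg.2 (mul_nonneg n.cast_nonneg (zero_le_one.trans one_lt_phi.le))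

theorem natCast_A (n : ℕ) : (A n : ℤ) = ⌊(n : ℝ) * phi⌋ :=
  Int.toNat_of_nonneg (floor_natCast_mul_phi_nonneg n)

theorem B_eq_A_add (n : ℕ) : B n = A n + n := by
  have h := floor_mul_phi_sq n
  push_cast at h
  have := floor_natCast_mul_phi_nonneg n
  rw [B, h, A]
  omega

theorem A_B (n : ℕ) : A (B n) = 2 * A n + n := by
  have h := floor_floor_mul_phi_add_mul_phi n
  push_cast at h
  rw [← natCast_A] at h
  zify
  rw [natCast_A, B_eq_A_add]
  exact_mod_cast h

/-- If V is a generalized Beatty sequence with parameters (p,q,r), then V∘B is a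
generalized Beatty sequence with parameters (2p+q, p+q, r). -/
theorem gbs_comp_B (p q r : ℤ) (V : ℕ → ℤ)
    (hV : ∀ n : ℕ, V n = p * (A n : ℤ) + q * n + r) :
    ∀ n : ℕ, 1 ≤ n → V (B n) = (2 * p + q) * (A n : ℤ) + (p + q) * n + r := by
  intro n _
  rw [hV, A_B, B_eq_A_add]
  push_cast
  ring
end
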